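/- Let E be a nonnegative integer and λ = √E. For every a ∈ L²(𝕋^d) and every orthonormal basis (ψ_1, …, ψ_m) of the eigenspace V_E, one has ∑_{i=1}^m |∫_{𝕋^d} a|ψ_i|² dx − ∫_{𝕋^d} a dx|² ≤ ∑_{n ∈ ℤ^d, 1 ≤ ‖n‖ ≤ 2λ} |â_n|² · #{k ∈ ℤ^d : ‖k‖ = ‖k+n‖ = λ}. -/

import Mathlib

open MeasureTheory Real BigOperators ComplexConjugate

noncomputable section

instance : Fact (0 < 2 * π) := ⟨by positivity⟩

/-- The flat torus `𝕋^d = ℝ^d/(2πℤ)^d`. -/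
abbrev Td (d : ℕ) := Fin d → AddCircle (2 * π)

/-- The normalized Haar probability measure on the flat torus. -/
def haarT (d : ℕ) : Measure (Td d) :=
  Measure.pi fun _ : Fin d => AddCircle.haarAddCircle

/-- The character `e_k(x) = e^{i⟨k,x⟩}` for `k ∈ ℤ^d`. -/
def eChar {d : ℕ} (k : Fin d → ℤ) (x : Td d) : ℂ := ∏ i, fourier (k i) (x i)

/-- Euclidean norm of a lattice point of `ℤ^d`. -/
def znorm {d : ℕ} (k : Fin d → ℤ) : ℝ := Real.sqrt (∑ i, ((k i : ℝ)) ^ 2)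

/-- The primitive lattice point `n̂` generating `n ≠ 0`: divide out the gcd of coordinates. -/
def primPart {d : ℕ} (n : Fin d → ℤ) : Fin d → ℤ := fun i => n i / Finset.univ.gcd n

/-- Fourier coefficient `â_n = ∫ a(x) e^{-i⟨n,x⟩} dx` of `a ∈ L²(𝕋^d)`. -/
def fcoef {d : ℕ} (a : Td d → ℂ) (n : Fin d → ℤ) : ℂ :=
  ∫ x, a x * conj (eChar n x) ∂(haarT d)

/-- Fourier transform `μ̂(n) = ∫ e^{-i⟨n,x⟩} dμ(x)` of a measure on `𝕋^d`. -/
def muF {d : ℕ} (μ : Measure (Td d)) (n : Fin d → ℤ) : ℂ :=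
  ∫ x, conj (eChar n x) ∂μ

/-- `N(λ) = #{k ∈ ℤ^d : ‖k‖ ≤ λ}`, the spectral counting function. -/
def latticeCount (d : ℕ) (lam : ℝ) : ℕ := Set.ncard {k : Fin d → ℤ | znorm k ≤ lam}

/-- An eigenbasis of `L²(𝕋^d)`: an orthonormal basis `(ψ_j)` of Laplace eigenfunctions
`ψ_j = ∑_{‖k‖ = Λ j} c_j(k) e_k`, with nondecreasing eigenvalues `(Λ j)²` (nonnegative
integers), orthonormality and completeness expressed via the Fourier coefficients. -/
structure Eigenbasis (d : ℕ) where
  ψ : ℕ → Td d → ℂ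
  Λ : ℕ → ℝ
  c : ℕ → (Fin d → ℤ) → ℂ
  nonneg : ∀ j, 0 ≤ Λ j
  mono : Monotone Λ
  eig_int : ∀ j, ∃ E : ℕ, Λ j ^ 2 = E
  repr : ∀ j x, ψ j x = ∑' k : Fin d → ℤ, c j k * eChar k x
  supp : ∀ j k, c j k ≠ 0 → znorm k = Λ j
  ortho : ∀ i j, ∑' k : Fin d → ℤ, c i k * conj (c j k) = if i = j then 1 else 0
  complete : ∀ k l : Fin d → ℤ, ∑' j : ℕ, c j k * conj (c j l) = if k = l then 1 else 0

/-- A function on the torus is smooth if its `(2πℤ)^d`-periodic lift to `ℝ^d` is `C^∞`. -/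
def SmoothOnTorus {d : ℕ} (a : Td d → ℂ) : Prop :=
  ContDiff ℝ (⊤ : ℕ∞) fun x : Fin d → ℝ => a fun i => (x i : AddCircle (2 * π))

/-!
Expand `ψ_i = ∑_{k ∈ S} C_{ik} e_k` over the lattice sphere `S = {‖k‖ = √E}`. Then
`∫ a |ψ_i|² - ∫ a = (C M Cᴴ)_{ii}` with `M_{kl} = â_{l-k} - â_0 δ_{kl}`, because the diagonal
part contributes `â_0 ∑_k |C_{ik}|² = ∫ a`. Completeness of the basis says `Cᴴ C = 1`, so the
squared diagonal entries of `C M Cᴴ` sum to at most its Hilbert–Schmidt norm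
`tr (C M Cᴴ C Mᴴ Cᴴ) = tr (M Mᴴ)`. Grouping the off-diagonal pairs `(k, l) ∈ S²` by `n = l - k`
gives the right-hand side, and `1 ≤ ‖n‖ ≤ 2√E` because `n` is a nonzero difference of two
points of `S`.
-/

open scoped Matrix

variable {d : ℕ}

section Matrix

variable {𝕜 ι κ : Type*} [RCLike 𝕜] [Fintype ι] [Fintype κ]

lemma trace_mul_conjTranspose_self_eq_sum_norm_sq (A : Matrix ι κ 𝕜) :
    (A * Aᴴ).trace = ((∑ i, ∑ j, ‖A i j‖ ^ 2 : ℝ) : 𝕜) := by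
  simp only [Matrix.trace, Matrix.diag, Matrix.mul_apply, Matrix.conjTranspose_apply]
  push_cast
  simp_rw [← starRingEnd_apply, RCLike.mul_conj]

lemma sum_norm_sq_diag_le_of_conjTranspose_mul_self_eq_one [DecidableEq κ]
    (C : Matrix ι κ 𝕜) (M : Matrix κ κ 𝕜) (hC : Cᴴ * C = 1) :
    ∑ i, ‖(C * M * Cᴴ) i i‖ ^ 2 ≤ ∑ k, ∑ l, ‖M k l‖ ^ 2 := by
  set B := C * M * Cᴴ
  have htrace : (B * Bᴴ).trace = (M * Mᴴ).trace := by
    calc (B * Bᴴ).trace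
        = (C * M * (Cᴴ * C) * Mᴴ * Cᴴ).trace := by
          simp only [B, Matrix.conjTranspose_mul, Matrix.conjTranspose_conjTranspose,
            Matrix.mul_assoc]
      _ = (C * (M * Mᴴ) * Cᴴ).trace := by
          rw [hC, Matrix.mul_one, Matrix.mul_assoc C M]
      _ = (Cᴴ * C * (M * Mᴴ)).trace := Matrix.trace_mul_cycle _ _ _
      _ = (M * Mᴴ).trace := by rw [hC, Matrix.one_mul]
  rw [trace_mul_conjTranspose_self_eq_sum_norm_sq, trace_mul_conjTranspose_self_eq_sum_norm_sq,
    RCLike.ofReal_inj] at htrace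
  rw [← htrace]
  exact Finset.sum_le_sum fun i _ =>
    Finset.single_le_sum (f := fun j => ‖B i j‖ ^ 2) (fun j _ => sq_nonneg _) (Finset.mem_univ i)

end Matrix

lemma abs_le_znorm (k : Fin d → ℤ) (i : Fin d) : |(k i : ℝ)| ≤ znorm k :=
  Real.abs_le_sqrt <|
    Finset.single_le_sum (f := fun j => (k j : ℝ) ^ 2) (fun _ _ => sq_nonneg _) (Finset.mem_univ i)

lemma one_le_znorm {n : Fin d → ℤ} (hn : n ≠ 0) : 1 ≤ znorm n := by
  obtain ⟨i, hi⟩ := Function.ne_iff.1 hn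
  exact (by exact_mod_cast Int.one_le_abs hi : (1 : ℝ) ≤ |(n i : ℝ)|).trans (abs_le_znorm n i)

lemma znorm_zero : znorm (0 : Fin d → ℤ) = 0 := by
  simp [znorm]

def intToEuclidean (k : Fin d → ℤ) : EuclideanSpace ℝ (Fin d) := WithLp.toLp 2 fun i => (k i : ℝ)

lemma intToEuclidean_sub (k l : Fin d → ℤ) :
    intToEuclidean (l - k) = intToEuclidean l - intToEuclidean k := by
  ext i
  simp [intToEuclidean]

lemma znorm_eq_norm_intToEuclidean (k : Fin d → ℤ) : znorm k = ‖intToEuclidean k‖ := by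
  simp [znorm, intToEuclidean, EuclideanSpace.norm_eq]

lemma znorm_sub_le (k l : Fin d → ℤ) : znorm (l - k) ≤ znorm l + znorm k := by
  simp only [znorm_eq_norm_intToEuclidean, intToEuclidean_sub]
  exact norm_sub_le _ _

lemma znorm_sq_eq_iff {k : Fin d → ℤ} {E : ℕ} : znorm k ^ 2 = E ↔ znorm k = √E := by
  refine ⟨fun h => ?_, fun h => ?_⟩
  · rw [← h]
    exact (Real.sqrt_sq (Real.sqrt_nonneg _)).symm
  · rw [h, Real.sq_sqrt E.cast_nonneg]

lemma finite_setOf_znorm_eq (r : ℝ) : {k : Fin d → ℤ | znorm k = r}.Finite :=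
  (Set.finite_Icc (fun _ => -⌈r⌉) (fun _ => ⌈r⌉)).subset fun k (hk : znorm k = r) => by
    have hi : ∀ i, |(k i : ℝ)| ≤ ⌈r⌉ := fun i => (abs_le_znorm k i).trans (hk ▸ Int.le_ceil r)
    exact ⟨fun i => by exact_mod_cast (abs_le.1 (hi i)).1,
      fun i => by exact_mod_cast (abs_le.1 (hi i)).2⟩

def latticeSphere (d : ℕ) (r : ℝ) : Finset (Fin d → ℤ) := (finite_setOf_znorm_eq r).toFinset

lemma mem_latticeSphere {r : ℝ} {k : Fin d → ℤ} : k ∈ latticeSphere d r ↔ znorm k = r :=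
  Set.Finite.mem_toFinset _

lemma one_le_znorm_sub_and_le_iff_ne {r : ℝ} {k l : Fin d → ℤ} (hk : k ∈ latticeSphere d r)
    (hl : l ∈ latticeSphere d r) : (1 ≤ znorm (l - k) ∧ znorm (l - k) ≤ 2 * r) ↔ k ≠ l := by
  rw [mem_latticeSphere] at hk hl
  refine ⟨fun h hkl => ?_, fun hkl => ⟨one_le_znorm (sub_ne_zero.2 (Ne.symm hkl)), ?_⟩⟩
  · rw [hkl, sub_self, znorm_zero] at h
    linarith [h.1]
  · linarith [znorm_sub_le k l]

lemma sum_sum_latticeSphere_offDiag_eq_tsum (r : ℝ) (f : (Fin d → ℤ) → ℝ) :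
    ∑ k ∈ latticeSphere d r, ∑ l ∈ latticeSphere d r, (if k = l then 0 else f (l - k))
      = ∑' n : Fin d → ℤ, if 1 ≤ znorm n ∧ znorm n ≤ 2 * r then
          f n * (Set.ncard {k : Fin d → ℤ | znorm k = r ∧ znorm (k + n) = r} : ℝ) else 0 := by
  set S := latticeSphere d r
  have hcount : ∀ n, (Set.ncard {k : Fin d → ℤ | znorm k = r ∧ znorm (k + n) = r} : ℝ)
      = ∑ k ∈ S, if k + n ∈ S then 1 else 0 := fun n => by
    have : {k : Fin d → ℤ | znorm k = r ∧ znorm (k + n) = r} = ↑(S.filter (· + n ∈ S)) := by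
      ext k
      simp [S, mem_latticeSphere]
    rw [this, Set.ncard_coe_finset, Finset.card_filter]
    push_cast
    rfl
  have hfiber : ∀ k ∈ S, HasSum
      (fun n => if (1 ≤ znorm n ∧ znorm n ≤ 2 * r) ∧ k + n ∈ S then f n else 0)
      (∑ l ∈ S, if k = l then 0 else f (l - k)) := by
    intro k hk
    rw [← (Equiv.subRight k).hasSum_iff]
    convert hasSum_sum_of_ne_finset_zero (L := .unconditional _) (s := S) (f := fun l =>
      if (1 ≤ znorm (l - k) ∧ znorm (l - k) ≤ 2 * r) ∧ l ∈ S then f (l - k) else 0)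
      (fun l hl => by simp [hl]) using 1
    · ext l
      simp
    · refine Finset.sum_congr rfl fun l hl => ?_
      simp only [hl, and_true, one_le_znorm_sub_and_le_iff_ne hk hl, ite_not]
  rw [(hasSum_sum hfiber).tsum_eq.symm]
  refine tsum_congr fun n => ?_
  rw [hcount, Finset.mul_sum]
  split_ifs with hn <;> simp [hn]

lemma eChar_mul_conj_eChar (k l : Fin d → ℤ) (x : Td d) :
    eChar k x * conj (eChar l x) = conj (eChar (l - k) x) := by
  simp only [eChar, map_prod, ← Finset.prod_mul_distrib]
  refine Finset.prod_congr rfl fun i _ => ?_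
  rw [← fourier_neg, ← fourier_neg, ← fourier_add, Pi.sub_apply, neg_sub, sub_eq_add_neg]

lemma norm_eChar (k : Fin d → ℤ) (x : Td d) : ‖eChar k x‖ = 1 := by
  rw [eChar, norm_prod]
  exact Finset.prod_eq_one fun i _ => Circle.norm_coe _

lemma continuous_eChar (k : Fin d → ℤ) : Continuous (eChar k) :=
  continuous_finsetProd _ fun i _ => (fourier (k i)).continuous.comp (continuous_apply i)

instance : IsProbabilityMeasure (haarT d) := by
  unfold haarT
  infer_instance

lemma fcoef_zero (a : Td d → ℂ) : fcoef a 0 = ∫ x, a x ∂haarT d := by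
  simp [fcoef, eChar]

lemma integrable_mul_conj_eChar {a : Td d → ℂ} (ha : Integrable a (haarT d)) (n : Fin d → ℤ) :
    Integrable (fun x => a x * conj (eChar n x)) (haarT d) :=
  ha.mul_bdd (continuous_eChar n).star.aestronglyMeasurable
    (ae_of_all _ fun x => (by rw [RCLike.norm_conj, norm_eChar] : ‖conj (eChar n x)‖ ≤ 1))

def fcoefMatrix (a : Td d → ℂ) (S : Finset (Fin d → ℤ)) : Matrix S S ℂ :=
  Matrix.of fun k l => fcoef a (l - k)

lemma integral_mul_norm_sum_eChar_sq {ι : Type*} [Fintype ι] {a : Td d → ℂ}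
    (ha : Integrable a (haarT d)) {S : Finset (Fin d → ℤ)} (C : Matrix ι S ℂ) (i : ι) :
    ∫ x, a x * ((‖∑ k : S, C i k * eChar k x‖ ^ 2 : ℝ) : ℂ) ∂haarT d
      = (C * fcoefMatrix a S * Cᴴ) i i := by
  have hexpand : ∀ x, a x * ((‖∑ k : S, C i k * eChar k x‖ ^ 2 : ℝ) : ℂ)
      = ∑ l : S, ∑ k : S,
          C i k * conj (C i l) * (a x * conj (eChar (↑l - ↑k : Fin d → ℤ) x)) := fun x => by
    rw [Complex.ofReal_pow, ← Complex.mul_conj', map_sum, Finset.sum_mul_sum, Finset.sum_comm,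
      Finset.mul_sum]
    refine Finset.sum_congr rfl fun l _ => ?_
    rw [Finset.mul_sum]
    refine Finset.sum_congr rfl fun k _ => ?_
    rw [map_mul, ← eChar_mul_conj_eChar]
    ring
  simp_rw [hexpand]
  rw [integral_finsetSum _ fun l _ => integrable_finsetSum _ fun _ _ =>
    (integrable_mul_conj_eChar ha _).const_mul _]
  simp only [Matrix.mul_apply, Matrix.conjTranspose_apply, RCLike.star_def, Finset.sum_mul]
  refine Finset.sum_congr rfl fun l _ => ?_
  rw [integral_finsetSum _ fun k _ => (integrable_mul_conj_eChar ha _).const_mul _]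
  refine Finset.sum_congr rfl fun k _ => ?_
  rw [integral_const_mul, fcoefMatrix, Matrix.of_apply, fcoef]
  ring

lemma integral_mul_norm_sum_eChar_sq_sub_integral {ι : Type*} [Fintype ι] {a : Td d → ℂ}
    (ha : Integrable a (haarT d)) {S : Finset (Fin d → ℤ)} (C : Matrix ι S ℂ) (i : ι)
    (hCi : (C * Cᴴ) i i = 1) :
    (∫ x, a x * ((‖∑ k : S, C i k * eChar k x‖ ^ 2 : ℝ) : ℂ) ∂haarT d) - ∫ x, a x ∂haarT d
      = (C * (fcoefMatrix a S - fcoef a 0 • (1 : Matrix S S ℂ)) * Cᴴ) i i := by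
  rw [integral_mul_norm_sum_eChar_sq ha, ← fcoef_zero, Matrix.mul_sub, Matrix.sub_mul,
    Matrix.mul_smul, Matrix.smul_mul, Matrix.mul_one, Matrix.sub_apply, Matrix.smul_apply, hCi,
    smul_eq_mul, mul_one]

lemma sum_sum_norm_sq_fcoefMatrix_sub (a : Td d → ℂ) (S : Finset (Fin d → ℤ)) :
    ∑ k, ∑ l, ‖(fcoefMatrix a S - fcoef a 0 • (1 : Matrix S S ℂ)) k l‖ ^ 2
      = ∑ k ∈ S, ∑ l ∈ S, if k = l then 0 else ‖fcoef a (l - k)‖ ^ 2 := by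
  rw [← Finset.sum_coe_sort S]
  refine Finset.sum_congr rfl fun k _ => ?_
  rw [← Finset.sum_coe_sort S]
  refine Finset.sum_congr rfl fun l _ => ?_
  by_cases hkl : k = l
  · simp [fcoefMatrix, hkl]
  · simp [fcoefMatrix, hkl, Subtype.ext_iff.not.1 hkl]

theorem statement5_general (d : ℕ) (E : ℕ)
    (a : Td d → ℂ) (ha : MemLp a 2 (haarT d))
    (m : ℕ) (ψ : Fin m → Td d → ℂ) (c : Fin m → (Fin d → ℤ) → ℂ)
    (hsupp : ∀ i k, c i k ≠ 0 → znorm k ^ 2 = E)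
    (hrepr : ∀ i x, ψ i x = ∑' k : Fin d → ℤ, c i k * eChar k x)
    (hortho : ∀ i j, ∑' k : Fin d → ℤ, c i k * conj (c j k) = if i = j then 1 else 0)
    (hcomplete : ∀ k l : Fin d → ℤ, znorm k ^ 2 = E → znorm l ^ 2 = E →
      ∑ i, c i k * conj (c i l) = if k = l then 1 else 0) :
    ∑ i, ‖(∫ x, a x * ((‖ψ i x‖ ^ 2 : ℝ) : ℂ) ∂(haarT d)) - ∫ x, a x ∂(haarT d)‖ ^ 2
      ≤ ∑' n : Fin d → ℤ,
          if 1 ≤ znorm n ∧ znorm n ≤ 2 * Real.sqrt E then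
            ‖fcoef a n‖ ^ 2 *
              (Set.ncard {k : Fin d → ℤ |
                znorm k = Real.sqrt E ∧ znorm (k + n) = Real.sqrt E} : ℝ)
          else 0 := by
  set S := latticeSphere d √E
  have hS : ∀ k, k ∈ S ↔ znorm k ^ 2 = E := fun k => mem_latticeSphere.trans znorm_sq_eq_iff.symm
  have hvanish : ∀ i, ∀ k ∉ S, c i k = 0 := fun i k hk => by
    by_contra h
    exact hk ((hS k).2 (hsupp i k h))
  let C : Matrix (Fin m) S ℂ := Matrix.of fun i k => c i k
  have htsum : ∀ i (g : (Fin d → ℤ) → ℂ), ∑' k, c i k * g k = ∑ k : S, C i k * g k :=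
    fun i g => by
      rw [tsum_eq_sum (s := S) fun k hk => by rw [hvanish i k hk, zero_mul],
        ← Finset.sum_coe_sort]
      rfl
  have hC : Cᴴ * C = 1 := by
    ext k l
    rw [Matrix.mul_apply, Matrix.one_apply]
    simp only [Matrix.conjTranspose_apply, Matrix.of_apply, RCLike.star_def, C]
    rw [Finset.sum_congr rfl fun i _ => mul_comm _ _, hcomplete l k ((hS l).1 l.2) ((hS k).1 k.2)]
    simp only [← Subtype.ext_iff, eq_comm]
  set M := fcoefMatrix a S - fcoef a 0 • (1 : Matrix S S ℂ)
  have hdiag : ∀ i, (∫ x, a x * ((‖ψ i x‖ ^ 2 : ℝ) : ℂ) ∂(haarT d)) - ∫ x, a x ∂(haarT d)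
      = (C * M * Cᴴ) i i := fun i => by
    have hunit : (C * Cᴴ) i i = 1 :=
      (htsum i fun k => conj (c i k)).symm.trans (by rw [hortho, if_pos rfl])
    simp_rw [hrepr, htsum]
    exact integral_mul_norm_sum_eChar_sq_sub_integral (ha.integrable one_le_two) C i hunit
  calc _ = ∑ i, ‖(C * M * Cᴴ) i i‖ ^ 2 := by simp_rw [hdiag]
    _ ≤ ∑ k, ∑ l, ‖M k l‖ ^ 2 := sum_norm_sq_diag_le_of_conjTranspose_mul_self_eq_one C M hC
    _ = ∑ k ∈ S, ∑ l ∈ S, if k = l then 0 else ‖fcoef a (l - k)‖ ^ 2 :=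
      sum_sum_norm_sq_fcoefMatrix_sub a S
    _ = _ := sum_sum_latticeSphere_offDiag_eq_tsum √E fun n => ‖fcoef a n‖ ^ 2

/-- variance bound on an individual eigenspace `V_E`. -/
theorem statement5 (d : ℕ) (hd : 2 ≤ d) (E : ℕ)
    (a : Td d → ℂ) (ha : MemLp a 2 (haarT d))
    (m : ℕ) (ψ : Fin m → Td d → ℂ) (c : Fin m → (Fin d → ℤ) → ℂ)
    (hsupp : ∀ i k, c i k ≠ 0 → znorm k ^ 2 = E)
    (hrepr : ∀ i x, ψ i x = ∑' k : Fin d → ℤ, c i k * eChar k x)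
    (hortho : ∀ i j, ∑' k : Fin d → ℤ, c i k * conj (c j k) = if i = j then 1 else 0)
    (hcomplete : ∀ k l : Fin d → ℤ, znorm k ^ 2 = E → znorm l ^ 2 = E →
      ∑ i, c i k * conj (c i l) = if k = l then 1 else 0) :
    ∑ i, ‖(∫ x, a x * ((‖ψ i x‖ ^ 2 : ℝ) : ℂ) ∂(haarT d)) - ∫ x, a x ∂(haarT d)‖ ^ 2
      ≤ ∑' n : Fin d → ℤ,
          if 1 ≤ znorm n ∧ znorm n ≤ 2 * Real.sqrt E then
            ‖fcoef a n‖ ^ 2 *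
              (Set.ncard {k : Fin d → ℤ |
                znorm k = Real.sqrt E ∧ znorm (k + n) = Real.sqrt E} : ℝ)
          else 0 :=
  statement5_general d E a ha m ψ c hsupp hrepr hortho hcomplete
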